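/- For any random variables K_S, K_T, A_S, A_T, X^N (finitely valued), if A := (A_S, A_T, X_{(S∪T)^c}^N) with A_{S∪T} = (A_S, A_T), and (A_S, A_T, X^N_{(S∪T)^c}) is a function of (A_S, X^N_{S^c}) and (A_T, A_S, X^N_{(S∪T)^c}, K_S) is a function of (A_T, X^N_{T^c}), then I(K_{S∪T}; A_{S∪T}, X^N_{(S∪T)^c}) ≤ I(K_S; A_S, X^N_{S^c}) + I(K_T; A_T, X^N_{T^c}), where K_{S∪T} = (K_S, K_T). -/

import Mathlib

noncomputable section
open Finset
open scoped Classical BigOperators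

/-- Probability of an event under a pmf on a finite sample space. -/
def Pr {Ω : Type} [Fintype Ω] (p : Ω → ℝ) (E : Ω → Prop) : ℝ :=
  ∑ ω : Ω, if E ω then p ω else 0

/-- `p` is a probability mass function. -/
def IsPMF {Ω : Type} [Fintype Ω] (p : Ω → ℝ) : Prop :=
  (∀ ω, 0 ≤ p ω) ∧ (∑ ω : Ω, p ω) = 1

/-- Shannon entropy of a finitely-valued random variable `X` under pmf `p`. -/
def ent {Ω α : Type} [Fintype Ω] [Fintype α] (p : Ω → ℝ) (X : Ω → α) : ℝ :=
  -∑ a : α, Pr p (fun ω => X ω = a) * Real.log (Pr p (fun ω => X ω = a))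

/-- Conditional Shannon entropy `H(X|Y)`. -/
def condEnt {Ω α β : Type} [Fintype Ω] [Fintype α] [Fintype β]
    (p : Ω → ℝ) (X : Ω → α) (Y : Ω → β) : ℝ :=
  ent p (fun ω => (X ω, Y ω)) - ent p Y

/-- Mutual information `I(X;Y)`. -/
def mi {Ω α β : Type} [Fintype Ω] [Fintype α] [Fintype β]
    (p : Ω → ℝ) (X : Ω → α) (Y : Ω → β) : ℝ :=
  ent p X + ent p Y - ent p (fun ω => (X ω, Y ω))

/-- Conditional mutual information `I(X;Y|Z)`. -/
def cmi {Ω α β γ : Type} [Fintype Ω] [Fintype α] [Fintype β] [Fintype γ]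
    (p : Ω → ℝ) (X : Ω → α) (Y : Ω → β) (Z : Ω → γ) : ℝ :=
  ent p (fun ω => (X ω, Z ω)) + ent p (fun ω => (Y ω, Z ω))
    - ent p (fun ω => (X ω, Y ω, Z ω)) - ent p Z

/-- `X` and `Y` are conditionally independent given `Z` (Markov chain `X - Z - Y`). -/
def CondIndep {Ω α β γ : Type} [Fintype Ω] [Fintype α] [Fintype β] [Fintype γ]
    (p : Ω → ℝ) (X : Ω → α) (Y : Ω → β) (Z : Ω → γ) : Prop :=
  ∀ (a : α) (b : β) (c : γ),
    Pr p (fun ω => X ω = a ∧ Y ω = b ∧ Z ω = c) * Pr p (fun ω => Z ω = c)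
      = Pr p (fun ω => X ω = a ∧ Z ω = c) * Pr p (fun ω => Y ω = b ∧ Z ω = c)

/-- The tuple random variable `X_S = (X_l)_{l ∈ S}`. -/
def XS {Ω L 𝒳 : Type} [Fintype Ω] (X : L → Ω → 𝒳) (S : Finset L) :
    Ω → (S → 𝒳) :=
  fun ω i => X i ω

/-- The value function of the secret-key generation game:
`v(S) = I(X_S; X_0 | X_{L\S})`. -/
def vGame {Ω L 𝒳 β : Type} [Fintype Ω] [Fintype L] [DecidableEq L] [Fintype 𝒳] [Fintype β]
    (p : Ω → ℝ) (X : L → Ω → 𝒳) (X0 : Ω → β) (S : Finset L) : ℝ :=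
  cmi p (XS X S) X0 (XS X Sᶜ)

/-!
By the chain rule, `I(K_S, K_T; A) = I(K_S; A) + I(K_T; A | K_S)`. Since `A` is a function of
`(A_S, X_{S^c})`, data processing bounds the first term by `I(K_S; A_S, X_{S^c})`. The second is at
most `I(K_T; A, K_S)`, and `(A, K_S)` is a function of `(A_T, X_{T^c})`, so data processing bounds
it by `I(K_T; A_T, X_{T^c})`. The only analytic input is `I(X; Y | Z) ≥ 0`, which is Gibbs'
inequality for the law of `(X, Y, Z)` against `P(x, z) P(y, z) / P(z)`.
-/

open Real

section Probability

variable {Ω δ : Type} [Fintype Ω] [Fintype δ] {p : Ω → ℝ}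

lemma Pr_nonneg (hp : IsPMF p) (E : Ω → Prop) : 0 ≤ Pr p E :=
  sum_nonneg fun ω _ => by split_ifs <;> simp [hp.1 ω]

lemma Pr_mono (hp : IsPMF p) {E F : Ω → Prop} (h : ∀ ω, E ω → F ω) : Pr p E ≤ Pr p F :=
  sum_le_sum fun ω _ => by
    by_cases hE : E ω
    · simp [hE, h ω hE]
    · by_cases hF : F ω <;> simp [hE, hF, hp.1 ω]

lemma sum_Pr_and (W : Ω → δ) (E : Ω → Prop) :
    ∑ d, Pr p (fun ω => W ω = d ∧ E ω) = Pr p E := by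
  unfold Pr
  rw [sum_comm]
  refine sum_congr rfl fun ω _ => ?_
  by_cases hE : E ω <;> simp [hE]

lemma sum_Pr_eq_one (hp : IsPMF p) (W : Ω → δ) : ∑ d, Pr p (fun ω => W ω = d) = 1 := by
  simpa [Pr, hp.2] using sum_Pr_and (p := p) W fun _ => True

lemma sum_Pr_pair_eq {α γ : Type} [Fintype α] (X : Ω → α) (Z : Ω → γ) (c : γ) :
    ∑ a, Pr p (fun ω => (X ω, Z ω) = (a, c)) = Pr p (fun ω => Z ω = c) := by
  simp only [Prod.mk.injEq, sum_Pr_and]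

lemma sum_Pr_mul (W : Ω → δ) (F : δ → ℝ) :
    ∑ d, Pr p (fun ω => W ω = d) * F d = ∑ ω, p ω * F (W ω) := by
  simp only [Pr, sum_mul, ite_mul, zero_mul]
  rw [sum_comm]
  simp

def condIndepLaw {α β γ : Type} (p : Ω → ℝ) (X : Ω → α) (Y : Ω → β) (Z : Ω → γ)
    (t : α × β × γ) : ℝ :=
  (Pr p fun ω => (X ω, Z ω) = (t.1, t.2.2)) * (Pr p fun ω => (Y ω, Z ω) = (t.2.1, t.2.2))
    / Pr p fun ω => Z ω = t.2.2

lemma condIndepLaw_nonneg {α β γ : Type} (hp : IsPMF p) (X : Ω → α) (Y : Ω → β) (Z : Ω → γ)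
    (t : α × β × γ) :
    0 ≤ condIndepLaw p X Y Z t :=
  div_nonneg (mul_nonneg (Pr_nonneg hp _) (Pr_nonneg hp _)) (Pr_nonneg hp _)

lemma Pr_marginals_pos {α β γ : Type} (hp : IsPMF p) {X : Ω → α} {Y : Ω → β} {Z : Ω → γ}
    {t : α × β × γ} (ht : 0 < Pr p fun ω => (X ω, Y ω, Z ω) = t) :
    (0 < Pr p fun ω => (X ω, Z ω) = (t.1, t.2.2))
      ∧ (0 < Pr p fun ω => (Y ω, Z ω) = (t.2.1, t.2.2)) ∧ 0 < Pr p fun ω => Z ω = t.2.2 := by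
  refine ⟨?_, ?_, ?_⟩ <;> exact ht.trans_le (Pr_mono hp fun ω h => by subst h; rfl)

lemma condIndepLaw_pos {α β γ : Type} (hp : IsPMF p) {X : Ω → α} {Y : Ω → β} {Z : Ω → γ}
    {t : α × β × γ} (ht : 0 < Pr p fun ω => (X ω, Y ω, Z ω) = t) :
    0 < condIndepLaw p X Y Z t :=
  let ⟨hXZ, hYZ, hZ⟩ := Pr_marginals_pos hp ht
  div_pos (mul_pos hXZ hYZ) hZ

end Probability

section Entropy

variable {Ω α β γ δ : Type} [Fintype Ω] [Fintype α] [Fintype β] [Fintype γ] [Fintype δ]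
  {p : Ω → ℝ}

lemma ent_eq_sum (Y : Ω → α) : ent p Y = -∑ ω, p ω * log (Pr p fun ω' => Y ω' = Y ω) := by
  rw [ent, sum_Pr_mul Y fun a => log (Pr p fun ω' => Y ω' = a)]

lemma ent_comp_eq_sum (W : Ω → δ) (f : δ → α) :
    ent p (fun ω => f (W ω))
      = -∑ t, Pr p (fun ω => W ω = t) * log (Pr p fun ω => f (W ω) = f t) := by
  rw [ent_eq_sum, sum_Pr_mul W fun t => log (Pr p fun ω => f (W ω) = f t)]

lemma ent_comp_of_injective (Y : Ω → β) {e : β → α} (he : Function.Injective e) :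
    ent p (fun ω => e (Y ω)) = ent p Y := by
  simp only [ent_eq_sum, he.eq_iff]

lemma sum_sub_sum_le_sum_mul_log_div {ι : Type} [Fintype ι] {q r : ι → ℝ} (hq : ∀ i, 0 ≤ q i)
    (hr : ∀ i, 0 ≤ r i) (hqr : ∀ i, 0 < q i → 0 < r i) :
    ∑ i, q i - ∑ i, r i ≤ ∑ i, q i * log (q i / r i) := by
  rw [← sum_sub_distrib]
  refine sum_le_sum fun i _ => ?_
  rcases (hq i).eq_or_lt with h0 | hpos
  · simp [← h0, hr i]
  · have hlog := one_sub_inv_le_log_of_pos (div_pos hpos (hqr i hpos))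
    rw [inv_div] at hlog
    calc q i - r i = q i * (1 - r i / q i) := by field_simp
      _ ≤ q i * log (q i / r i) := mul_le_mul_of_nonneg_left hlog hpos.le

lemma sum_condIndepLaw (hp : IsPMF p) (X : Ω → α) (Y : Ω → β) (Z : Ω → γ) :
    ∑ t, condIndepLaw p X Y Z t = 1 := by
  rw [Fintype.sum_prod_type_right, Fintype.sum_prod_type_right, ← sum_Pr_eq_one hp Z]
  refine sum_congr rfl fun c _ => ?_
  simp only [condIndepLaw, ← sum_div, ← sum_mul, ← mul_sum, sum_Pr_pair_eq]
  exact mul_self_div_self _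

lemma cmi_eq_sum (X : Ω → α) (Y : Ω → β) (Z : Ω → γ) :
    cmi p X Y Z = ∑ t : α × β × γ, (Pr p fun ω => (X ω, Y ω, Z ω) = t) *
      (log (Pr p fun ω => (X ω, Y ω, Z ω) = t) + log (Pr p fun ω => Z ω = t.2.2)
        - log (Pr p fun ω => (X ω, Z ω) = (t.1, t.2.2))
        - log (Pr p fun ω => (Y ω, Z ω) = (t.2.1, t.2.2))) := by
  let W := fun ω => (X ω, Y ω, Z ω)
  have hXZ : ent p (fun ω => (X ω, Z ω)) = -∑ t : α × β × γ,
      (Pr p fun ω => W ω = t) * log (Pr p fun ω => (X ω, Z ω) = (t.1, t.2.2)) :=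
    ent_comp_eq_sum W fun t => (t.1, t.2.2)
  have hYZ : ent p (fun ω => (Y ω, Z ω)) = -∑ t : α × β × γ,
      (Pr p fun ω => W ω = t) * log (Pr p fun ω => (Y ω, Z ω) = (t.2.1, t.2.2)) :=
    ent_comp_eq_sum W fun t => (t.2.1, t.2.2)
  have hZ : ent p Z = -∑ t : α × β × γ,
      (Pr p fun ω => W ω = t) * log (Pr p fun ω => Z ω = t.2.2) :=
    ent_comp_eq_sum W fun t => t.2.2
  rw [cmi, hXZ, hYZ, hZ, ent]
  simp only [mul_add, mul_sub, sum_add_distrib, sum_sub_distrib]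
  ring

lemma cmi_eq_sum_mul_log_div (hp : IsPMF p) (X : Ω → α) (Y : Ω → β) (Z : Ω → γ) :
    cmi p X Y Z = ∑ t, (Pr p fun ω => (X ω, Y ω, Z ω) = t) *
      log ((Pr p fun ω => (X ω, Y ω, Z ω) = t) / condIndepLaw p X Y Z t) := by
  rw [cmi_eq_sum]
  refine sum_congr rfl fun t _ => ?_
  rcases (Pr_nonneg hp fun ω => (X ω, Y ω, Z ω) = t).eq_or_lt with h0 | hpos
  · simp [← h0]
  · obtain ⟨hXZ, hYZ, hZ⟩ := Pr_marginals_pos hp hpos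
    rw [condIndepLaw, log_div hpos.ne' (div_pos (mul_pos hXZ hYZ) hZ).ne',
      log_div (mul_pos hXZ hYZ).ne' hZ.ne', log_mul hXZ.ne' hYZ.ne']
    ring

theorem cmi_nonneg (hp : IsPMF p) (X : Ω → α) (Y : Ω → β) (Z : Ω → γ) : 0 ≤ cmi p X Y Z := by
  have gibbs := sum_sub_sum_le_sum_mul_log_div (fun t => Pr_nonneg hp _)
    (condIndepLaw_nonneg hp X Y Z) fun t => condIndepLaw_pos hp (t := t)
  rwa [sum_Pr_eq_one hp, sum_condIndepLaw hp, sub_self, ← cmi_eq_sum_mul_log_div hp] at gibbs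

lemma mi_nonneg (hp : IsPMF p) (X : Ω → α) (Y : Ω → β) : 0 ≤ mi p X Y := by
  have h := cmi_nonneg hp X Y fun _ => ()
  have hX : ent p (fun ω => (X ω, ())) = ent p X :=
    ent_comp_of_injective X (e := fun x => (x, ())) fun _ _ h => congrArg Prod.fst h
  have hY : ent p (fun ω => (Y ω, ())) = ent p Y :=
    ent_comp_of_injective Y (e := fun y => (y, ())) fun _ _ h => congrArg Prod.fst h
  have hXY : ent p (fun ω => (X ω, Y ω, ())) = ent p (fun ω => (X ω, Y ω)) :=
    ent_comp_of_injective (fun ω => (X ω, Y ω)) (e := fun t => (t.1, t.2, ()))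
      (Function.LeftInverse.injective (g := fun t => (t.1, t.2.1)) fun _ => rfl)
  have hunit : ent p (fun _ => ()) = 0 := by simp [ent, Pr, hp.2]
  rw [cmi, hX, hY, hXY, hunit] at h
  rw [mi]
  linarith

lemma mi_le_mi_of_comp (hp : IsPMF p) (X : Ω → α) {Y : Ω → β} {Z : Ω → γ} (g : β → γ)
    (hZ : ∀ ω, Z ω = g (Y ω)) : mi p X Z ≤ mi p X Y := by
  obtain rfl : Z = fun ω => g (Y ω) := funext hZ
  have h := cmi_nonneg hp X Y fun ω => g (Y ω)
  have hY : ent p (fun ω => (Y ω, g (Y ω))) = ent p Y :=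
    ent_comp_of_injective Y (e := fun y => (y, g y)) fun _ _ h => congrArg Prod.fst h
  have hXY : ent p (fun ω => (X ω, Y ω, g (Y ω))) = ent p (fun ω => (X ω, Y ω)) :=
    ent_comp_of_injective (fun ω => (X ω, Y ω)) (e := fun t => (t.1, t.2, g t.2))
      (Function.LeftInverse.injective (g := fun t => (t.1, t.2.1)) fun _ => rfl)
  rw [cmi, hY, hXY] at h
  rw [mi, mi]
  linarith

lemma mi_prod_eq_mi_add_cmi (X : Ω → α) (Y : Ω → β) (Z : Ω → γ) :
    mi p (fun ω => (X ω, Y ω)) Z = mi p X Z + cmi p Y Z X := by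
  have hYX : ent p (fun ω => (Y ω, X ω)) = ent p (fun ω => (X ω, Y ω)) :=
    ent_comp_of_injective (fun ω => (X ω, Y ω)) Prod.swap_injective
  have hZX : ent p (fun ω => (Z ω, X ω)) = ent p (fun ω => (X ω, Z ω)) :=
    ent_comp_of_injective (fun ω => (X ω, Z ω)) Prod.swap_injective
  have hYZX : ent p (fun ω => (Y ω, Z ω, X ω)) = ent p (fun ω => ((X ω, Y ω), Z ω)) :=
    ent_comp_of_injective (fun ω => ((X ω, Y ω), Z ω)) (e := fun t => (t.1.2, t.2, t.1.1))
      (Function.LeftInverse.injective (g := fun s => ((s.2.2, s.1), s.2.1)) fun _ => rfl)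
  rw [mi, mi, cmi, hYX, hZX, hYZX]
  ring

lemma cmi_le_mi_prod (hp : IsPMF p) (X : Ω → α) (Y : Ω → β) (Z : Ω → γ) :
    cmi p X Y Z ≤ mi p X (fun ω => (Y ω, Z ω)) := by
  have h := mi_nonneg hp X Z
  rw [mi] at h
  rw [cmi, mi]
  linarith

end Entropy

/-- the key mutual-information chain inequality: if
`(A_S, A_T, X^N_{(S∪T)^c})` is a function of `(A_S, X^N_{S^c})` and
`(A_T, A_S, X^N_{(S∪T)^c}, K_S)` is a function of `(A_T, X^N_{T^c})`, then
`I(K_{S∪T}; A_{S∪T}, X^N_{(S∪T)^c}) ≤ I(K_S; A_S, X^N_{S^c}) + I(K_T; A_T, X^N_{T^c})`. -/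
theorem statement19 {Ω κ₁ κ₂ α₁ α₂ β₁ β₂ β₃ : Type} [Fintype Ω] [Fintype κ₁] [Fintype κ₂]
    [Fintype α₁] [Fintype α₂] [Fintype β₁] [Fintype β₂] [Fintype β₃]
    (p : Ω → ℝ) (hp : IsPMF p)
    (KS : Ω → κ₁) (KT : Ω → κ₂) (AS : Ω → α₁) (AT : Ω → α₂)
    (XSc : Ω → β₁) (XTc : Ω → β₂) (XSTc : Ω → β₃)
    (h1 : ∃ g : α₁ × β₁ → α₁ × α₂ × β₃, ∀ ω, g (AS ω, XSc ω) = (AS ω, AT ω, XSTc ω))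
    (h2 : ∃ h : α₂ × β₂ → α₂ × α₁ × β₃ × κ₁,
      ∀ ω, h (AT ω, XTc ω) = (AT ω, AS ω, XSTc ω, KS ω)) :
    mi p (fun ω => (KS ω, KT ω)) (fun ω => (AS ω, AT ω, XSTc ω))
      ≤ mi p KS (fun ω => (AS ω, XSc ω)) + mi p KT (fun ω => (AT ω, XTc ω)) := by
  obtain ⟨g, hg⟩ := h1
  obtain ⟨h, hh⟩ := h2
  calc mi p (fun ω => (KS ω, KT ω)) (fun ω => (AS ω, AT ω, XSTc ω))
      = mi p KS (fun ω => (AS ω, AT ω, XSTc ω))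
        + cmi p KT (fun ω => (AS ω, AT ω, XSTc ω)) KS := mi_prod_eq_mi_add_cmi KS KT _
    _ ≤ mi p KS (fun ω => (AS ω, XSc ω))
        + mi p KT (fun ω => ((AS ω, AT ω, XSTc ω), KS ω)) :=
      add_le_add (mi_le_mi_of_comp hp KS g fun ω => (hg ω).symm) (cmi_le_mi_prod hp KT _ KS)
    _ ≤ mi p KS (fun ω => (AS ω, XSc ω)) + mi p KT (fun ω => (AT ω, XTc ω)) := by
      refine add_le_add_right (mi_le_mi_of_comp hp KT
        (fun w => (((h w).2.1, (h w).1, (h w).2.2.1), (h w).2.2.2)) fun ω => ?_) _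
      simp only [hh ω]
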